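/- arXiv:2510.20623 — 2 statements merged into one kernel-verified Lean document; each statement's English description precedes it below -/
import Mathlib

section
/- Let W : ℝ^{3×3} → [0, ∞) be twice continuously differentiable on an open neighborhood of the identity matrix Id and satisfy W(R) = 0 for every R ∈ SO(3). Define the linear map ℒ : ℝ^{3×3} → ℝ^{3×3} by ⟨ℒF₁, F₂⟩ = D²W(Id)[F₁, F₂] (Frobenius inner product). Then ℒS = 0 for every skew-symmetric matrix S, and consequently ℒF = ℒ(sym F) for every F ∈ ℝ^{3×3}, where sym F := ½(F + Fᵀ). -/
/-!
At the minimum `Id` the Hessian `Q = D²W(Id)` is positive semidefinite. For a skew-symmetric `S`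
the curve `t ↦ exp (t • S)` lies in SO(3), where `W` vanishes, and has velocity `S` at `Id`;
since `Id` is a critical point, differentiating `W` twice along it gives `Q(S, S) = 0`.
For a symmetric positive semidefinite form this forces `Q(S, ·) = 0`, i.e. `⟨ℒS, F⟩ = 0` for
all `F`, and applying it to the skew part `F - sym F` gives `ℒF = ℒ(sym F)`.
-/

open Matrix

noncomputable section

attribute [local instance]
  Matrix.frobeniusNormedAddCommGroup Matrix.frobeniusNormedSpace

abbrev Mat3 := Matrix (Fin 3) (Fin 3) ℝ

def SO3 : Set Mat3 := {R | Rᵀ * R = 1 ∧ R.det = 1}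

def finner (A B : Mat3) : ℝ := ∑ i, ∑ j, A i j * B i j

def symPart (M : Mat3) : Mat3 := (1 / 2 : ℝ) • (M + Mᵀ)

open Filter Topology NormedSpace

-- If the second derivative were negative, the second derivative test would make `t` a local
-- maximum as well, so `g` would be locally constant.
theorem IsLocalMin.deriv_deriv_nonneg {g : ℝ → ℝ} {t : ℝ} (hmin : IsLocalMin g t)
    (hc : ContinuousAt g t) : 0 ≤ deriv (deriv g) t := by
  by_contra! hneg
  have hmax := isLocalMax_of_deriv_deriv_neg hneg hmin.deriv_eq_zero hc
  have hconst : g =ᶠ[𝓝 t] fun _ => g t :=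
    (hmin.and hmax).mono fun s hs => le_antisymm hs.2 hs.1
  rw [hconst.deriv.deriv_eq] at hneg
  simp at hneg

section Hessian

variable {E : Type*} [NormedAddCommGroup E] [NormedSpace ℝ E] {f : E → ℝ} {x : E}
  {f'' : E →L[ℝ] E →L[ℝ] ℝ}

theorem IsLocalMin.hessian_apply_self_nonneg (hmin : IsLocalMin f x)
    (hf : ∀ᶠ y in 𝓝 x, DifferentiableAt ℝ f y) (hf'' : HasFDerivAt (fderiv ℝ f) f'' x)
    (v : E) : 0 ≤ f'' v v := by
  set ℓ : ℝ → E := fun t => x + t • v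
  have hℓ : ∀ t, HasDerivAt ℓ v t := fun t =>
    (((hasDerivAt_id' t).smul_const v).const_add x).congr_deriv (one_smul ℝ v)
  have hℓ0 : ℓ 0 = x := by simp [ℓ]
  have hℓx : Tendsto ℓ (𝓝 0) (𝓝 x) := hℓ0 ▸ (hℓ 0).continuousAt.tendsto
  have hfirst : deriv (f ∘ ℓ) =ᶠ[𝓝 0] fun t => fderiv ℝ f (ℓ t) v :=
    (hℓx.eventually hf).mono fun t ht => (ht.hasFDerivAt.comp_hasDerivAt t (hℓ t)).deriv
  have hsecond : HasDerivAt (fun t => fderiv ℝ f (ℓ t) v) (f'' v v) 0 := by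
    rw [← hℓ0] at hf''
    simpa using (hf''.comp_hasDerivAt 0 (hℓ 0)).clm_apply (hasDerivAt_const 0 v)
  have hmin' : IsLocalMin (f ∘ ℓ) 0 := (hℓ0 ▸ hmin).comp_continuous (hℓ 0).continuousAt
  have hc : ContinuousAt (f ∘ ℓ) 0 :=
    (hℓ0 ▸ hf.self_of_nhds.continuousAt).comp (hℓ 0).continuousAt
  simpa [hfirst.deriv_eq, hsecond.deriv] using hmin'.deriv_deriv_nonneg hc

theorem hessian_apply_self_eq_zero_of_comp_eventuallyEq_const {γ γ' : ℝ → E} {a : E} {c : ℝ}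
    (hcrit : fderiv ℝ f x = 0) (hf : ∀ᶠ y in 𝓝 x, DifferentiableAt ℝ f y)
    (hf'' : HasFDerivAt (fderiv ℝ f) f'' x) (hγ0 : γ 0 = x)
    (hγ : ∀ᶠ t in 𝓝 0, HasDerivAt γ (γ' t) t) (hγ' : HasDerivAt γ' a 0)
    (hconst : f ∘ γ =ᶠ[𝓝 0] fun _ => c) : f'' (γ' 0) (γ' 0) = 0 := by
  have hγx : Tendsto γ (𝓝 0) (𝓝 x) := hγ0 ▸ hγ.self_of_nhds.continuousAt.tendsto
  have hfirst : (fun t => fderiv ℝ f (γ t) (γ' t)) =ᶠ[𝓝 0] fun _ => 0 := by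
    filter_upwards [hγx.eventually hf, hγ, hconst.eventuallyEq_nhds] with t hft hγt hct
    exact ((hft.hasFDerivAt.comp_hasDerivAt t hγt).congr_of_eventuallyEq hct.symm).unique
      (hasDerivAt_const t c)
  rw [← hγ0] at hf'' hcrit
  have hsecond := (hf''.comp_hasDerivAt 0 hγ.self_of_nhds).clm_apply hγ'
  simp only [Function.comp_apply, hcrit, _root_.zero_apply, add_zero] at hsecond
  simpa using (hsecond.congr_of_eventuallyEq hfirst.symm).unique (hasDerivAt_const 0 0)

theorem ContinuousLinearMap.apply_eq_zero_of_apply_self_eq_zero {B : E →L[ℝ] E →L[ℝ] ℝ}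
    (hpos : ∀ v, 0 ≤ B v v) (hsymm : ∀ v w, B v w = B w v) {x : E} (hx : B x x = 0) (y : E) :
    B x y = 0 := by
  have hB : B.toLinearMap₁₂.IsSymm := ⟨hsymm⟩
  exact LinearMap.congr_fun
    ((LinearMap.BilinForm.apply_apply_same_eq_zero_iff _ hpos hB).mp hx) y

end Hessian

theorem exp_mem_specialOrthogonalGroup {n : Type*} [Fintype n] [DecidableEq n]
    {S : Matrix n n ℝ} (hS : Sᵀ = -S) : exp S ∈ specialOrthogonalGroup n ℝ := by
  have hunit : IsUnit (exp S).det := (isUnit_iff_isUnit_det _).mp (isUnit_exp S)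
  have horth : (exp S)ᵀ * exp S = 1 := by
    rw [← exp_transpose, hS, Matrix.exp_neg, nonsing_inv_mul _ hunit]
  -- `det (exp S)` is a square, hence nonnegative, and its square is `1`.
  have hsq : (exp S).det = (exp ((1 / 2 : ℝ) • S)).det ^ 2 := by
    rw [sq, ← det_mul, ← exp_add_of_commute _ _ (Commute.refl _), ← add_smul]
    norm_num
  have hdet_sq : (exp S).det ^ 2 = 1 := by
    simpa [sq] using congrArg det horth
  refine mem_specialOrthogonalGroup_iff.mpr ⟨(mem_orthogonalGroup_iff' n ℝ).mpr horth, ?_⟩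
  nlinarith [sq_nonneg (exp ((1 / 2 : ℝ) • S)).det]

theorem mem_SO3_iff {R : Mat3} : R ∈ SO3 ↔ R ∈ specialOrthogonalGroup (Fin 3) ℝ := by
  rw [mem_specialOrthogonalGroup_iff, mem_orthogonalGroup_iff']
  rfl

theorem finner_single_one_right (A : Mat3) (i j : Fin 3) : finner A (single i j 1) = A i j := by
  simp [finner, single_apply, ite_and]

theorem finner_zero_left (B : Mat3) : finner 0 B = 0 := by
  simp [finner]

theorem ext_finner {A B : Mat3} (h : ∀ G, finner A G = finner B G) : A = B := by
  ext i j
  simpa only [finner_single_one_right] using h (single i j 1)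

theorem transpose_sub_symPart (F : Mat3) : (F - symPart F)ᵀ = -(F - symPart F) := by
  simp only [symPart, transpose_sub, transpose_smul, transpose_add, transpose_transpose]
  module

attribute [local instance] Matrix.frobeniusNormedRing Matrix.frobeniusNormedAlgebra

theorem L_kills_skew_and_depends_on_sym
    (W : Mat3 → ℝ) (U : Set Mat3) (hU : IsOpen U) (hIdU : (1 : Mat3) ∈ U)
    (hC2 : ContDiffOn ℝ 2 W U)
    (hpos : ∀ F : Mat3, 0 ≤ W F)
    (hSO : ∀ R ∈ SO3, W R = 0)
    (L : Mat3 → Mat3)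
    (hL : ∀ F₁ F₂ : Mat3, finner (L F₁) F₂ = fderiv ℝ (fderiv ℝ W) 1 F₁ F₂) :
    (∀ S : Mat3, Sᵀ = -S → L S = 0) ∧ (∀ F : Mat3, L F = L (symPart F)) := by
  have hW : ContDiffAt ℝ 2 W 1 := hC2.contDiffAt (hU.mem_nhds hIdU)
  set Q := fderiv ℝ (fderiv ℝ W) 1
  have hdiff : ∀ᶠ y in 𝓝 1, DifferentiableAt ℝ W y :=
    (hW.eventually (by simp)).mono fun y hy => hy.differentiableAt (by norm_num)
  have hQ : HasFDerivAt (fderiv ℝ W) Q 1 :=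
    ((hW.fderiv_right (m := 1) le_rfl).differentiableAt one_ne_zero).hasFDerivAt
  have hmin : IsLocalMin W 1 :=
    Eventually.of_forall fun F => (hSO 1 (mem_SO3_iff.mpr (one_mem _))).symm ▸ hpos F
  have hskew : ∀ S : Mat3, Sᵀ = -S → ∀ F, Q S F = 0 := by
    intro S hS
    refine ContinuousLinearMap.apply_eq_zero_of_apply_self_eq_zero
      (hmin.hessian_apply_self_nonneg hdiff hQ) (hW.isSymmSndFDerivAt (by simp)).eq ?_
    have hcurve : ∀ t : ℝ, exp (t • S) ∈ SO3 := fun t => mem_SO3_iff.mpr <|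
      exp_mem_specialOrthogonalGroup (by rw [transpose_smul, hS, smul_neg])
    simpa using hessian_apply_self_eq_zero_of_comp_eventuallyEq_const hmin.fderiv_eq_zero
      hdiff hQ (by simp) (Eventually.of_forall (hasDerivAt_exp_smul_const S))
      ((hasDerivAt_exp_smul_const S 0).mul_const S)
      (Eventually.of_forall fun t => hSO _ (hcurve t))
  refine ⟨fun S hS => ext_finner fun G => ?_, fun F => ext_finner fun G => ?_⟩
  · rw [hL, hskew S hS, finner_zero_left]
  · rw [hL, hL, ← sub_eq_zero, ← _root_.sub_apply, ← map_sub,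
      hskew _ (transpose_sub_symPart F)]
end
end

section
/- Let W : ℝ^{3×3} → ℝ be differentiable at every point and frame indifferent, i.e. W(RF) = W(F) for every R ∈ SO(3) and F ∈ ℝ^{3×3}. Let h > 0, let G ∈ ℝ^{3×3}, and set E := h^{-2} DW(Id + h²G). Then E − Eᵀ = −h² (E Gᵀ − G Eᵀ). -/
/- STATEMENT 7: For a frame-indifferent differentiable `W`, `h > 0`, `G ∈ ℝ^{3×3}` and
`E := h⁻² DW(Id + h²G)`, one has `E − Eᵀ = −h²(E Gᵀ − G Eᵀ)`. -/

open Matrix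

noncomputable section

attribute [local instance]
  Matrix.frobeniusNormedAddCommGroup Matrix.frobeniusNormedSpace

/-! Frame indifference makes `t ↦ W (exp (t • A) * F)` constant for every skew-symmetric `A`,
since `exp (t • A)` is a rotation. Differentiating at `t = 0` gives
`DW(F) : A F = (DW(F) Fᵀ) : A = 0` for all skew `A`, so `DW(F) Fᵀ` is symmetric.
For `F = 1 + h² G` and `DW(F) = h² E` this symmetry, divided by `h²`, is the identity. -/

attribute [local instance] Matrix.frobeniusNormedRing Matrix.frobeniusNormedAlgebra

open NormedSpace

theorem det_exp_nonneg {n : Type*} [Fintype n] [DecidableEq n] (A : Matrix n n ℝ) :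
    0 ≤ (exp A).det := by
  have hhalves : (2⁻¹ : ℝ) • A + (2⁻¹ : ℝ) • A = A := by rw [← add_smul]; norm_num
  rw [← hhalves, Matrix.exp_add_of_commute _ _ (Commute.refl _), det_mul]
  exact mul_self_nonneg _

theorem exp_mem_SO3_of_transpose_eq_neg {A : Mat3} (hA : Aᵀ = -A) : exp A ∈ SO3 := by
  have horth : (exp A)ᵀ * exp A = 1 := by
    rw [← Matrix.exp_transpose, hA,
      ← Matrix.exp_add_of_commute _ _ (Commute.neg_left (Commute.refl A)), neg_add_cancel,
      exp_zero]
  refine ⟨horth, ?_⟩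
  have hdet_sq : (exp A).det ^ 2 = 1 := by
    simpa [det_transpose, sq] using congrArg det horth
  exact (pow_eq_one_iff_of_nonneg (det_exp_nonneg A) two_ne_zero).mp hdet_sq

theorem finner_mul_right (B A F : Mat3) : finner B (A * F) = finner (B * Fᵀ) A := by
  simp only [finner, mul_apply, transpose_apply, Fin.sum_univ_three]
  ring

theorem finner_sub_right (M X Y : Mat3) : finner M (X - Y) = finner M X - finner M Y := by
  simp [finner, mul_sub, Finset.sum_sub_distrib]

theorem finner_single_one (M : Mat3) (i j : Fin 3) : finner M (single i j 1) = M i j := by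
  fin_cases i <;> fin_cases j <;> simp [finner, single, Fin.sum_univ_three]

theorem isSymm_of_finner_skew_eq_zero {M : Mat3} (hM : ∀ A : Mat3, Aᵀ = -A → finner M A = 0) :
    M.IsSymm := by
  ext i j
  have hskew : (single j i (1 : ℝ) - single i j 1)ᵀ = -(single j i 1 - single i j 1) := by
    rw [transpose_sub, transpose_single, transpose_single, neg_sub]
  have h := hM _ hskew
  rw [finner_sub_right, finner_single_one, finner_single_one, sub_eq_zero] at h
  exact h

theorem fderiv_apply_skew_mul_eq_zero {W : Mat3 → ℝ} {F A : Mat3} (hW : DifferentiableAt ℝ W F)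
    (hfi : ∀ R ∈ SO3, W (R * F) = W F) (hA : Aᵀ = -A) : fderiv ℝ W F (A * F) = 0 := by
  have hderiv : HasDerivAt (fun t : ℝ => W (exp (t • A) * F)) (fderiv ℝ W F (A * F)) 0 := by
    have hcurve := (hasDerivAt_exp_smul_const A (0 : ℝ)).mul_const F
    rw [zero_smul, exp_zero, one_mul] at hcurve
    exact hW.hasFDerivAt.comp_hasDerivAt_of_eq 0 hcurve (by rw [zero_smul, exp_zero, one_mul])
  have hconst : (fun t : ℝ => W (exp (t • A) * F)) = fun _ => W F := by
    funext t
    refine hfi _ (exp_mem_SO3_of_transpose_eq_neg ?_)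
    rw [transpose_smul, hA, smul_neg]
  rw [hconst] at hderiv
  exact hderiv.unique (hasDerivAt_const 0 (W F))

theorem isSymm_mul_transpose_of_frameIndifferent {W : Mat3 → ℝ} {F D : Mat3}
    (hW : DifferentiableAt ℝ W F) (hD : ∀ H, fderiv ℝ W F H = finner D H)
    (hfi : ∀ R ∈ SO3, W (R * F) = W F) : (D * Fᵀ).IsSymm :=
  isSymm_of_finner_skew_eq_zero fun A hA => by
    rw [← finner_mul_right, ← hD, fderiv_apply_skew_mul_eq_zero hW hfi hA]

theorem rescaled_stress_skew_identity
    (W : Mat3 → ℝ) (DW : Mat3 → Mat3)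
    (hdiff : Differentiable ℝ W)
    (hDW : ∀ F H : Mat3, fderiv ℝ W F H = finner (DW F) H)
    (hfi : ∀ R ∈ SO3, ∀ F : Mat3, W (R * F) = W F)
    (h : ℝ) (hh : 0 < h) (G E : Mat3)
    (hE : E = (h ^ 2)⁻¹ • DW (1 + h ^ 2 • G)) :
    E - Eᵀ = -(h ^ 2 • (E * Gᵀ - G * Eᵀ)) := by
  have hne : h ^ 2 ≠ 0 := pow_ne_zero 2 hh.ne'
  have hstress : DW (1 + h ^ 2 • G) = h ^ 2 • E := by rw [hE, smul_inv_smul₀ hne]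
  have hsym : ((h ^ 2 • E) * (1 + h ^ 2 • G)ᵀ)ᵀ = (h ^ 2 • E) * (1 + h ^ 2 • G)ᵀ := by
    rw [← hstress]
    exact isSymm_mul_transpose_of_frameIndifferent (hdiff _) (hDW _) (fun R hR => hfi R hR _)
  simp only [transpose_add, transpose_one, transpose_smul, transpose_mul, transpose_transpose,
    mul_add, mul_one, mul_smul_comm, smul_mul_assoc, smul_smul] at hsym
  have hcancel : E + h ^ 2 • (E * Gᵀ) = Eᵀ + h ^ 2 • (G * Eᵀ) := by
    apply smul_right_injective Mat3 hne
    linear_combination (norm := module) -hsym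
  rw [smul_sub, neg_sub, sub_eq_sub_iff_add_eq_add, hcancel, add_comm]
end
end
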